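/- arXiv:1309.0643 — 3 statements merged into one kernel-verified Lean document; each statement's English description precedes it below -/
import Mathlib

section
/- Let G and H be two connected graphs each with at least two vertices, and let v, x, y be vertices of H with x ≠ v and y ≠ v. For every vertex a of G, the vertices (a,x) and (a,y) are mutually maximally distant in the rooted product graph G∘_v H if and only if x and y are mutually maximally distant in H. -/
namespace RootedStrong

variable {V : Type*}

/-- `u` is maximally distant from `v`: every neighbor `w` of `u` satisfies `d(v,w) ≤ d(u,v)`. -/
def MaxDistant (G : SimpleGraph V) (u v : V) : Prop :=
  ∀ w, G.Adj u w → G.dist v w ≤ G.dist u v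

/-- `u` and `v` are mutually maximally distant. -/
def MMD (G : SimpleGraph V) (u v : V) : Prop :=
  MaxDistant G u v ∧ MaxDistant G v u

/-- The boundary `∂(G)` of a graph. -/
def boundary (G : SimpleGraph V) : Set V := {u | ∃ v, MMD G u v}

/-- A vertex is simplicial if its neighborhood induces a complete graph. -/
def Simplicial (G : SimpleGraph V) (u : V) : Prop :=
  ∀ x ∈ G.neighborSet u, ∀ y ∈ G.neighborSet u, x ≠ y → G.Adj x y

/-- The set `σ(G)` of simplicial vertices. -/
def simplicialSet (G : SimpleGraph V) : Set V := {u | Simplicial G u}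

/-- `w` strongly resolves `u` and `v`. -/
def StronglyResolves (G : SimpleGraph V) (w u v : V) : Prop :=
  G.dist w u = G.dist w v + G.dist v u ∨ G.dist w v = G.dist w u + G.dist u v

/-- A set of vertices is a strong metric generator if every pair of distinct vertices is
strongly resolved by some of its elements. -/
def IsStrongGenerator (G : SimpleGraph V) (S : Set V) : Prop :=
  ∀ u v : V, u ≠ v → ∃ w ∈ S, StronglyResolves G w u v

/-- The strong metric dimension of a graph. -/
noncomputable def sdim (G : SimpleGraph V) [Fintype V] : ℕ :=
  sInf {n | ∃ S : Finset V, S.card = n ∧ IsStrongGenerator G (S : Set V)}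

/-- A strong metric basis: a strong metric generator of minimum cardinality. -/
def IsStrongBasis (G : SimpleGraph V) [Fintype V] (S : Finset V) : Prop :=
  IsStrongGenerator G (S : Set V) ∧ S.card = sdim G

/-- The rooted product graph `G ∘_v H`. -/
def rootedProd {α β : Type*} (G : SimpleGraph α) (H : SimpleGraph β) (v : β) :
    SimpleGraph (α × β) where
  Adj p q := (p.1 = q.1 ∧ H.Adj p.2 q.2) ∨ (p.2 = v ∧ q.2 = v ∧ G.Adj p.1 q.1)
  symm := by
    constructor
    rintro ⟨a, x⟩ ⟨b, y⟩ (⟨h1, h2⟩ | ⟨h1, h2, h3⟩)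
    · exact Or.inl ⟨h1.symm, h2.symm⟩
    · exact Or.inr ⟨h2, h1, h3.symm⟩
  loopless := by
    constructor
    rintro ⟨a, x⟩ (⟨_, h2⟩ | ⟨_, _, h3⟩)
    · exact H.irrefl h2
    · exact G.irrefl h3

/-- Two distinct vertices are true twins if they have equal closed neighborhoods. -/
def TrueTwins (G : SimpleGraph V) (x y : V) : Prop :=
  x ≠ y ∧ ∀ z, (z = x ∨ G.Adj x z) ↔ (z = y ∨ G.Adj y z)

/-- A twin-free clique: a clique containing no pair of true twins. -/
def IsTwinFreeClique (G : SimpleGraph V) (X : Set V) : Prop :=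
  (∀ x ∈ X, ∀ y ∈ X, x ≠ y → G.Adj x y) ∧ ∀ x ∈ X, ∀ y ∈ X, ¬ TrueTwins G x y

/-- The twin-free clique number `ϖ(G)`. -/
noncomputable def twinFreeCliqueNum (G : SimpleGraph V) : ℕ :=
  sSup {n | ∃ X : Set V, IsTwinFreeClique G X ∧ X.ncard = n}

/-! Distances inside a copy `{a} × H` of `H` are those of `H`: the inclusion is a homomorphism,
and projecting a walk of `G ∘_v H` to its second coordinate gives a walk of `H` that is no longer,
since the edges of `G` (all at height `v`) collapse to a point. Away from the root `v` the
neighbors of `(a, x)` are the `(a, w)` with `w` a neighbor of `x`, so being maximally distant is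
read off in `H`. -/

open SimpleGraph

theorem _root_.SimpleGraph.Hom.edist_map_le {V W : Type*} {G : SimpleGraph V} {G' : SimpleGraph W}
    (f : G →g G') (u v : V) : G'.edist (f u) (f v) ≤ G.edist u v := by
  rw [edist_eq_sInf (G := G)]
  refine le_sInf ?_
  rintro _ ⟨p, rfl⟩
  simpa only [Walk.length_map] using edist_le (p.map f)

section RootedProduct

variable {α β : Type*} {G : SimpleGraph α} {H : SimpleGraph β} {v : β}

theorem rootedProd_adj {p q : α × β} :
    (rootedProd G H v).Adj p q ↔
      (p.1 = q.1 ∧ H.Adj p.2 q.2) ∨ (p.2 = v ∧ q.2 = v ∧ G.Adj p.1 q.1) :=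
  Iff.rfl

variable (G H v) in
def rootedProdFiberHom (a : α) : H →g rootedProd G H v where
  toFun z := (a, z)
  map_rel' h := Or.inl ⟨rfl, h⟩

theorem exists_walk_snd_length_le {p q : α × β} (W : (rootedProd G H v).Walk p q) :
    ∃ W' : H.Walk p.2 q.2, W'.length ≤ W.length := by
  induction W with
  | nil => exact ⟨.nil, le_rfl⟩
  | cons h _ ih =>
    obtain ⟨W', hW'⟩ := ih
    rcases h with ⟨-, hH⟩ | ⟨hp, hq, -⟩
    · exact ⟨.cons hH W', Nat.succ_le_succ hW'⟩
    · refine ⟨W'.copy (hq.trans hp.symm) rfl, ?_⟩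
      rw [Walk.length_copy]
      exact hW'.trans (Nat.le_succ _)

theorem edist_snd_le_rootedProd_edist (p q : α × β) :
    H.edist p.2 q.2 ≤ (rootedProd G H v).edist p q := by
  rw [edist_eq_sInf (G := rootedProd G H v)]
  refine le_sInf ?_
  rintro _ ⟨W, rfl⟩
  obtain ⟨W', hW'⟩ := exists_walk_snd_length_le W
  exact (edist_le W').trans (Nat.cast_le.mpr hW')

theorem rootedProd_edist_fiber (a : α) (z w : β) :
    (rootedProd G H v).edist (a, z) (a, w) = H.edist z w :=
  le_antisymm (Hom.edist_map_le (rootedProdFiberHom G H v a) z w)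
    (edist_snd_le_rootedProd_edist (a, z) (a, w))

theorem rootedProd_dist_fiber (a : α) (z w : β) :
    (rootedProd G H v).dist (a, z) (a, w) = H.dist z w := by
  unfold SimpleGraph.dist
  rw [rootedProd_edist_fiber]

theorem rootedProd_adj_fiber_iff {a : α} {x : β} (hx : x ≠ v) {p : α × β} :
    (rootedProd G H v).Adj (a, x) p ↔ p.1 = a ∧ H.Adj x p.2 := by
  rw [rootedProd_adj]
  exact ⟨fun h => h.elim (fun h => ⟨h.1.symm, h.2⟩) (fun h => absurd h.1 hx),
    fun h => Or.inl ⟨h.1.symm, h.2⟩⟩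

theorem maxDistant_rootedProd_fiber_iff {x : β} (hx : x ≠ v) (a : α) (y : β) :
    MaxDistant (rootedProd G H v) (a, x) (a, y) ↔ MaxDistant H x y := by
  simp only [MaxDistant, Prod.forall, rootedProd_adj_fiber_iff hx, and_imp]
  constructor
  · intro h w hw
    simpa only [rootedProd_dist_fiber] using h a w rfl hw
  · rintro h _ w rfl hw
    simpa only [rootedProd_dist_fiber] using h w hw

end RootedProduct

theorem statement1_general {α β : Type*}
    (G : SimpleGraph α) (H : SimpleGraph β)
    (v x y : β) (hx : x ≠ v) (hy : y ≠ v) (a : α) :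
    MMD (rootedProd G H v) (a, x) (a, y) ↔ MMD H x y := by
  rw [MMD, MMD, maxDistant_rootedProd_fiber_iff hx, maxDistant_rootedProd_fiber_iff hy]

theorem statement1 {α β : Type*} [Fintype α] [Fintype β]
    (G : SimpleGraph α) (H : SimpleGraph β)
    (hG : G.Connected) (hH : H.Connected)
    (hGn : 2 ≤ Fintype.card α) (hHn : 2 ≤ Fintype.card β)
    (v x y : β) (hx : x ≠ v) (hy : y ≠ v) (a : α) :
    MMD (rootedProd G H v) (a, x) (a, y) ↔ MMD H x y :=
  statement1_general G H v x y hx hy a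

end RootedStrong
end

section
/- Let H be a connected graph, let v be a vertex of H, and let M(v) be the set of vertices of H which are maximally distant from v. Then M(v) ⊆ ∂(H), that is, every vertex maximally distant from v is mutually maximally distant from some vertex of H. -/
namespace RootedStrong

variable {V : Type*}

/-! Among the vertices from which `u` is maximally distant, pick `v'` farthest from `u`. A neighbour
`w` of `v'` farther from `u` than `v'` would again have `u` maximally distant from it, by the
triangle inequality through `v'`; this contradicts the choice of `v'`, so `u` and `v'` are
mutually maximally distant. -/

theorem MaxDistant.of_adj {G : SimpleGraph V} {u v w : V} (huv : MaxDistant G u v)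
    (hvw : G.Adj v w) (hlt : G.dist u v < G.dist u w) : MaxDistant G u w := by
  intro x hux
  have htri : G.dist w x ≤ G.dist w v + G.dist v x := hvw.symm.reachable.dist_triangle_left x
  have hwv : G.dist w v = 1 := SimpleGraph.dist_eq_one_iff_adj.mpr hvw.symm
  have hvx : G.dist v x ≤ G.dist u v := huv x hux
  omega

theorem statement2_general {β : Type*} [Fintype β] (H : SimpleGraph β)
    (v u : β) (hu : MaxDistant H u v) : u ∈ boundary H := by
  obtain ⟨v', hv', hfarthest⟩ :=
    Set.exists_max_image {w | MaxDistant H u w} (H.dist u) (Set.toFinite _) ⟨v, hu⟩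
  refine ⟨v', hv', fun w hw => ?_⟩
  by_contra! hlt
  rw [SimpleGraph.dist_comm] at hlt
  exact (hfarthest w (hv'.of_adj hw hlt)).not_gt hlt

theorem statement2 {β : Type*} [Fintype β] (H : SimpleGraph β) (hH : H.Connected)
    (v u : β) (hu : MaxDistant H u v) : u ∈ boundary H :=
  statement2_general H v u hu

end RootedStrong
end

section
/- Let G be a connected graph of order n ≥ 2, let T be a tree with at least two vertices having l(T) leaves, and let v be a vertex of T. If v is a leaf of T, then dim_s(G∘_v T) = n(l(T) − 1) − 1, and if v is an inner vertex of T (i.e., not a leaf), then dim_s(G∘_v T) = n·l(T) − 1. -/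
/-!
In `G ∘_v T` a geodesic between different copies of `T` runs through the two roots. Hence a
leaf `x ≠ v` of a copy of `T` is maximally distant from every other vertex, and any two of the
`n · |leaves(T) \ {v}|` such vertices are mutually maximally distant. Such a pair is strongly
resolved only by its own members, so a strong metric generator omits at most one of them.
Conversely, every pair of vertices is strongly resolved by two different such vertices, essentially
leaves of `T` beyond either end of a geodesic placed in the right copies. So all of them but one
form a strong metric generator, and `dim_s(G ∘_v T) = n · |leaves(T) \ {v}| - 1`.
-/

namespace RootedStrong

variable {V : Type*}

open SimpleGraph

section StrongResolution

variable {V : Type*} {G : SimpleGraph V}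

lemma StronglyResolves.symm {w u u' : V} (h : StronglyResolves G w u u') :
    StronglyResolves G w u' u :=
  Or.symm h

lemma isStrongGenerator_univ : IsStrongGenerator G Set.univ :=
  fun u _ _ => ⟨u, trivial, Or.inr (by simp)⟩

lemma _root_.SimpleGraph.Connected.exists_adj_dist_add_one (hG : G.Connected) {w z : V}
    (hwz : w ≠ z) :
    ∃ s, G.Adj w s ∧ G.dist s z + 1 = G.dist w z := by
  obtain ⟨p, hp⟩ := hG.exists_walk_length_eq_dist w z
  cases p with
  | nil => exact absurd rfl hwz
  | cons hadj q =>
    refine ⟨_, hadj, le_antisymm ?_ ?_⟩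
    · rw [← hp, Walk.length_cons]
      exact Nat.add_le_add_right (dist_le q) 1
    · calc G.dist w z ≤ G.dist w _ + G.dist _ z := hG.dist_triangle
        _ = G.dist _ z + 1 := by rw [dist_eq_one_iff_adj.mpr hadj, add_comm]

lemma eq_of_maxDistant_of_dist_eq_add (hG : G.Connected) {u w z : V} (hw : MaxDistant G w u)
    (h : G.dist z u = G.dist z w + G.dist w u) : z = w := by
  by_contra hzw
  obtain ⟨s, hadj, hs⟩ := hG.exists_adj_dist_add_one (Ne.symm hzw)
  have hsu : G.dist u s ≤ G.dist w u := hw s hadj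
  have htri : G.dist z u ≤ G.dist z s + G.dist s u := hG.dist_triangle
  rw [dist_comm (u := s) (v := z), dist_comm (u := w) (v := z)] at hs
  rw [dist_comm (u := s) (v := u)] at htri
  omega

lemma MMD.eq_or_eq_of_stronglyResolves (hG : G.Connected) {u w z : V} (h : MMD G u w)
    (hz : StronglyResolves G z u w) : z = u ∨ z = w :=
  hz.elim (fun h' => Or.inr (eq_of_maxDistant_of_dist_eq_add hG h.2 h'))
    (fun h' => Or.inl (eq_of_maxDistant_of_dist_eq_add hG h.1 h'))

lemma ncard_le_ncard_add_one_of_pairwise_mmd [Finite V] (hG : G.Connected) {L S : Set V}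
    (hL : L.Pairwise (MMD G)) (hS : IsStrongGenerator G S) : L.ncard ≤ S.ncard + 1 := by
  have hLS : (L \ S).ncard ≤ 1 := by
    refine (Set.ncard_le_one).mpr fun p hp q hq => by_contra fun hpq => ?_
    obtain ⟨z, hzS, hz⟩ := hS p q hpq
    rcases (hL hp.1 hq.1 hpq).eq_or_eq_of_stronglyResolves hG hz with rfl | rfl
    · exact hp.2 hzS
    · exact hq.2 hzS
  have := Set.ncard_le_ncard_sdiff_add_ncard L S
  omega

lemma isStrongGenerator_sdiff_singleton {S : Set V}
    (h : ∀ u u', u ≠ u' → ∃ w₁ ∈ S, ∃ w₂ ∈ S, w₁ ≠ w₂ ∧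
      StronglyResolves G w₁ u u' ∧ StronglyResolves G w₂ u u') (z : V) :
    IsStrongGenerator G (S \ {z}) := by
  intro u u' hu
  obtain ⟨w₁, hw₁, w₂, hw₂, hne, h₁, h₂⟩ := h u u' hu
  by_cases hz : w₁ = z
  · exact ⟨w₂, ⟨hw₂, fun h => hne (hz.trans h.symm)⟩, h₂⟩
  · exact ⟨w₁, ⟨hw₁, hz⟩, h₁⟩

variable [Fintype V]

lemma sdim_le_ncard {S : Set V} (hS : IsStrongGenerator G S) : sdim G ≤ S.ncard :=
  Nat.sInf_le ⟨S.toFinite.toFinset, (Set.ncard_eq_toFinset_card S).symm, by simpa using hS⟩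

lemma exists_isStrongGenerator_ncard_eq_sdim :
    ∃ S : Set V, IsStrongGenerator G S ∧ S.ncard = sdim G := by
  obtain ⟨S, hcard, hS⟩ := Nat.sInf_mem (s := {n | ∃ S : Finset V, S.card = n ∧
    IsStrongGenerator G (S : Set V)}) ⟨_, Finset.univ, rfl, by simpa using isStrongGenerator_univ⟩
  exact ⟨S, hS, by rw [Set.ncard_coe_finset]; exact hcard⟩

theorem sdim_add_one_eq_ncard (hG : G.Connected) {L : Set V} (hL : L.Pairwise (MMD G))
    {z : V} (hz : z ∈ L) (hgen : IsStrongGenerator G (L \ {z})) : sdim G + 1 = L.ncard := by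
  obtain ⟨S, hS, hcard⟩ := exists_isStrongGenerator_ncard_eq_sdim (G := G)
  have hle := ncard_le_ncard_add_one_of_pairwise_mmd hG hL hS
  have hge := sdim_le_ncard hgen
  have := Set.ncard_sdiff_singleton_add_one hz
  omega

end StrongResolution

section RootedProductDistance

variable {α β : Type*} {G : SimpleGraph α} {H : SimpleGraph β} {v : β}

/-- A geodesic between different copies of `H` runs through the roots of both copies. -/
noncomputable def rootedDist (G : SimpleGraph α) (H : SimpleGraph β) (v : β) (p q : α × β) : ℕ :=
  open Classical in
  if p.1 = q.1 then H.dist p.2 q.2 else H.dist p.2 v + G.dist p.1 q.1 + H.dist v q.2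

lemma rootedDist_mk_same (a : α) (x y : β) : rootedDist G H v (a, x) (a, y) = H.dist x y :=
  if_pos rfl

lemma rootedDist_mk_of_ne {a b : α} (hab : a ≠ b) (x y : β) :
    rootedDist G H v (a, x) (b, y) = H.dist x v + G.dist a b + H.dist v y :=
  if_neg hab

lemma rootedDist_comm (p q : α × β) : rootedDist G H v p q = rootedDist G H v q p := by
  obtain ⟨a, x⟩ := p
  obtain ⟨b, y⟩ := q
  by_cases hab : a = b
  · subst hab
    simp only [rootedDist_mk_same, dist_comm]
  · rw [rootedDist_mk_of_ne hab, rootedDist_mk_of_ne (Ne.symm hab), dist_comm (u := x),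
      dist_comm (u := a), dist_comm (v := y)]
    omega

lemma exists_walk_rootedProd_copy (a : α) {x y : β} (w : H.Walk x y) :
    ∃ w' : (rootedProd G H v).Walk (a, x) (a, y), w'.length = w.length :=
  ⟨w.map ⟨fun x => (a, x), fun h => Or.inl ⟨rfl, h⟩⟩, w.length_map _⟩

lemma exists_walk_rootedProd_root {a b : α} (w : G.Walk a b) :
    ∃ w' : (rootedProd G H v).Walk (a, v) (b, v), w'.length = w.length :=
  ⟨w.map ⟨fun a => (a, v), fun h => Or.inr ⟨rfl, rfl, h⟩⟩, w.length_map _⟩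

variable (hG : G.Connected) (hH : H.Connected)
include hG hH

lemma exists_walk_rootedProd_length_eq (p q : α × β) :
    ∃ w : (rootedProd G H v).Walk p q, w.length = rootedDist G H v p q := by
  obtain ⟨a, x⟩ := p
  obtain ⟨b, y⟩ := q
  by_cases hab : a = b
  · subst hab
    obtain ⟨w, hw⟩ := hH.exists_walk_length_eq_dist x y
    obtain ⟨w', hw'⟩ := exists_walk_rootedProd_copy (G := G) (v := v) a w
    exact ⟨w', by rw [hw', hw, rootedDist_mk_same]⟩
  · obtain ⟨w₁, hw₁⟩ := hH.exists_walk_length_eq_dist x v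
    obtain ⟨w₂, hw₂⟩ := hG.exists_walk_length_eq_dist a b
    obtain ⟨w₃, hw₃⟩ := hH.exists_walk_length_eq_dist v y
    obtain ⟨w₁', hw₁'⟩ := exists_walk_rootedProd_copy (G := G) (v := v) a w₁
    obtain ⟨w₂', hw₂'⟩ := exists_walk_rootedProd_root (H := H) (v := v) w₂
    obtain ⟨w₃', hw₃'⟩ := exists_walk_rootedProd_copy (G := G) (v := v) b w₃
    refine ⟨(w₁'.append w₂').append w₃', ?_⟩
    rw [Walk.length_append, Walk.length_append, hw₁', hw₂', hw₃', hw₁, hw₂, hw₃,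
      rootedDist_mk_of_ne hab]

lemma connected_rootedProd : (rootedProd G H v).Connected := by
  obtain ⟨a⟩ := hG.nonempty
  obtain ⟨x⟩ := hH.nonempty
  have : Nonempty (α × β) := ⟨(a, x)⟩
  exact ⟨fun p q => (exists_walk_rootedProd_length_eq hG hH p q).elim fun w _ => w.reachable⟩

lemma rootedDist_le_add_one_of_adj (p : α × β) {q r : α × β} (h : (rootedProd G H v).Adj q r) :
    rootedDist G H v p r ≤ rootedDist G H v p q + 1 := by
  obtain ⟨a, x⟩ := p
  obtain ⟨b, y⟩ := q
  obtain ⟨c, z⟩ := r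
  dsimp only [rootedProd] at h
  rcases h with ⟨rfl, hyz⟩ | ⟨rfl, rfl, hbc⟩
  · have hyz : H.dist y z = 1 := dist_eq_one_iff_adj.mpr hyz
    by_cases hab : a = b
    · subst hab
      rw [rootedDist_mk_same, rootedDist_mk_same]
      have : H.dist x z ≤ H.dist x y + H.dist y z := hH.dist_triangle
      omega
    · rw [rootedDist_mk_of_ne hab, rootedDist_mk_of_ne hab]
      have : H.dist v z ≤ H.dist v y + H.dist y z := hH.dist_triangle
      omega
  · have hbc' : G.dist b c = 1 := dist_eq_one_iff_adj.mpr hbc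
    by_cases hab : a = b
    · subst hab
      rw [rootedDist_mk_same, rootedDist_mk_of_ne hbc.ne, SimpleGraph.dist_self]
      omega
    · by_cases hac : a = c
      · subst hac
        rw [rootedDist_mk_same, rootedDist_mk_of_ne hab, SimpleGraph.dist_self]
        omega
      · rw [rootedDist_mk_of_ne hab, rootedDist_mk_of_ne hac]
        have : G.dist a c ≤ G.dist a b + G.dist b c := hG.dist_triangle
        omega

lemma rootedDist_le_length {p q : α × β} (w : (rootedProd G H v).Walk p q) :
    rootedDist G H v p q ≤ w.length := by
  induction w with
  | nil => simp [rootedDist]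
  | @cons p p' q h w ih =>
    rw [Walk.length_cons, rootedDist_comm]
    have := rootedDist_le_add_one_of_adj hG hH q h.symm
    rw [rootedDist_comm q p'] at this
    omega

lemma dist_rootedProd (p q : α × β) : (rootedProd G H v).dist p q = rootedDist G H v p q := by
  obtain ⟨w, hw⟩ := exists_walk_rootedProd_length_eq hG hH p q
  obtain ⟨w', hw'⟩ := (connected_rootedProd hG hH).exists_walk_length_eq_dist p q
  exact le_antisymm (hw ▸ dist_le w) (hw' ▸ rootedDist_le_length hG hH w')

lemma dist_rootedProd_mk_same (a : α) (x y : β) :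
    (rootedProd G H v).dist (a, x) (a, y) = H.dist x y := by
  rw [dist_rootedProd hG hH, rootedDist_mk_same]

lemma dist_rootedProd_mk_of_ne {a b : α} (hab : a ≠ b) (x y : β) :
    (rootedProd G H v).dist (a, x) (b, y) = H.dist x v + G.dist a b + H.dist v y := by
  rw [dist_rootedProd hG hH, rootedDist_mk_of_ne hab]

end RootedProductDistance

section Leaves

variable {β : Type*} {H : SimpleGraph β}

def leaves (H : SimpleGraph β) : Set β := {x | (H.neighborSet x).ncard = 1}

lemma eq_of_mem_leaves_of_adj {x y z : β} (hx : x ∈ leaves H) (hy : H.Adj x y) (hz : H.Adj x z) :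
    y = z := by
  obtain ⟨w, hw⟩ := Set.ncard_eq_one.mp hx
  have hy' : y ∈ H.neighborSet x := hy
  have hz' : z ∈ H.neighborSet x := hz
  rw [hw] at hy' hz'
  exact hy'.trans hz'.symm

lemma dist_eq_dist_add_one_of_mem_leaves (hH : H.Connected) {x x' u : β} (hx : x ∈ leaves H)
    (hadj : H.Adj x x') (hu : u ≠ x) : H.dist u x = H.dist u x' + 1 := by
  obtain ⟨s, hs, hsu⟩ := hH.exists_adj_dist_add_one hu.symm
  rw [eq_of_mem_leaves_of_adj hx hs hadj] at hsu
  rw [dist_comm (u := u), dist_comm (u := u), hsu]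

lemma _root_.SimpleGraph.IsTree.eq_of_adj_of_dist_add_one (hT : H.IsTree) {x y n₁ n₂ : β}
    (h₁ : H.Adj x n₁) (h₂ : H.Adj x n₂) (hd₁ : H.dist y n₁ + 1 = H.dist y x)
    (hd₂ : H.dist y n₂ + 1 = H.dist y x) : n₁ = n₂ := by
  obtain ⟨q₁, hq₁⟩ := hT.connected.exists_walk_length_eq_dist y n₁
  obtain ⟨q₂, hq₂⟩ := hT.connected.exists_walk_length_eq_dist y n₂
  have hp₁ := (q₁.concat h₁.symm).isPath_of_length_eq_dist (by rw [Walk.length_concat]; omega)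
  have hp₂ := (q₂.concat h₂.symm).isPath_of_length_eq_dist (by rw [Walk.length_concat]; omega)
  obtain ⟨h, -⟩ := Walk.concat_inj
    (congrArg Subtype.val ((hT.isAcyclic.subsingleton_path y x).elim ⟨_, hp₁⟩ ⟨_, hp₂⟩))
  exact h

variable [Finite β] [Nontrivial β]

lemma exists_adj_dist_eq_add_one_of_notMem_leaves (hT : H.IsTree) {x : β} (hx : x ∉ leaves H)
    (y : β) : ∃ x', H.Adj x x' ∧ H.dist y x' = H.dist y x + 1 := by
  obtain ⟨n₀, h₀⟩ := hT.connected.preconnected.exists_adj_of_nontrivial x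
  have hpos : 0 < (H.neighborSet x).ncard := (Set.ncard_pos (Set.toFinite _)).mpr ⟨n₀, h₀⟩
  obtain ⟨n₁, h₁, n₂, h₂, hne⟩ := (Set.one_lt_ncard (Set.toFinite _)).mp
    (lt_of_le_of_ne hpos (Ne.symm hx))
  rcases hT.dist_eq_dist_add_one_of_adj y h₁ with hd₁ | hd₁
  · rcases hT.dist_eq_dist_add_one_of_adj y h₂ with hd₂ | hd₂
    · exact absurd (hT.eq_of_adj_of_dist_add_one h₁ h₂ hd₁.symm hd₂.symm) hne
    · exact ⟨n₂, h₂, hd₂⟩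
  · exact ⟨n₁, h₁, hd₁⟩

/-- Take `l` farthest from `x` among the vertices `l` with `x` on a geodesic from `y` to `l`:
a vertex that is not a leaf has a neighbour one step farther from `y`. -/
lemma exists_mem_leaves_dist_eq_add (hT : H.IsTree) (y x : β) :
    ∃ l ∈ leaves H, H.dist y l = H.dist y x + H.dist x l := by
  obtain ⟨l, hl, hmax⟩ := Set.exists_max_image {l | H.dist y l = H.dist y x + H.dist x l}
    (H.dist x) (Set.toFinite _) ⟨x, by simp⟩
  refine ⟨l, by_contra fun hleaf => ?_, hl⟩
  obtain ⟨l', hadj, hl'⟩ := exists_adj_dist_eq_add_one_of_notMem_leaves hT hleaf y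
  have h₁ : H.dist x l' ≤ H.dist x l + H.dist l l' := hT.connected.dist_triangle
  have h₂ : H.dist y l' ≤ H.dist y x + H.dist x l' := hT.connected.dist_triangle
  rw [dist_eq_one_iff_adj.mpr hadj] at h₁
  have hl : H.dist y l = H.dist y x + H.dist x l := hl
  have := hmax l' (show H.dist y l' = H.dist y x + H.dist x l' by omega)
  omega

lemma exists_mem_leaves_ne_dist_eq_add (hT : H.IsTree) (y x : β) :
    ∃ l ∈ leaves H, l ≠ y ∧ H.dist y l = H.dist y x + H.dist x l := by
  obtain ⟨x', hx'y, hx'⟩ : ∃ x', x' ≠ y ∧ ∀ l, H.dist y l = H.dist y x' + H.dist x' l →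
      H.dist y l = H.dist y x + H.dist x l := by
    by_cases hxy : x = y
    · obtain ⟨x', hx'⟩ := exists_ne y
      exact ⟨x', hx', fun l _ => by simp [hxy]⟩
    · exact ⟨x, hxy, fun _ h => h⟩
  obtain ⟨l, hl, hd⟩ := exists_mem_leaves_dist_eq_add hT y x'
  have := hT.connected.pos_dist_of_ne hx'y.symm
  refine ⟨l, hl, fun h => ?_, hx' l hd⟩
  subst h
  simp only [SimpleGraph.dist_self] at hd
  omega

lemma exists_two_mem_leaves_stronglyResolves (hT : H.IsTree) {x y : β} (hxy : x ≠ y) :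
    ∃ l₁ ∈ leaves H, ∃ l₂ ∈ leaves H, l₁ ≠ l₂ ∧
      StronglyResolves H l₁ x y ∧ StronglyResolves H l₂ x y := by
  obtain ⟨l₁, hl₁, hd₁⟩ := exists_mem_leaves_dist_eq_add hT y x
  obtain ⟨l₂, hl₂, hd₂⟩ := exists_mem_leaves_dist_eq_add hT x y
  have := hT.connected.pos_dist_of_ne hxy
  refine ⟨l₁, hl₁, l₂, hl₂, fun h => ?_, Or.inr ?_, Or.inl ?_⟩
  · subst h
    rw [dist_comm (u := y) (v := x)] at hd₁
    omega
  · rw [dist_comm (u := l₁), dist_comm (u := l₁), hd₁, dist_comm (u := x) (v := l₁),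
      dist_comm (u := y) (v := x), add_comm]
  · rw [dist_comm (u := l₂), dist_comm (u := l₂), hd₂, dist_comm (u := y) (v := l₂), add_comm,
      dist_comm (u := x) (v := y)]

end Leaves

section LeafCopies

variable {α β : Type*} {G : SimpleGraph α} {H : SimpleGraph β} {v : β}

def leafCopies (α : Type*) (H : SimpleGraph β) (v : β) : Set (α × β) :=
  Set.univ ×ˢ (leaves H \ {v})

lemma mem_leafCopies {p : α × β} : p ∈ leafCopies α H v ↔ p.2 ∈ leaves H ∧ p.2 ≠ v := by
  simp [leafCopies]

lemma maxDistant_rootedProd_of_mem_leaves (hG : G.Connected) (hH : H.Connected) {a : α} {x : β}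
    (hx : x ∈ leaves H) (hxv : x ≠ v) {q : α × β} (hq : (a, x) ≠ q) :
    MaxDistant (rootedProd G H v) (a, x) q := by
  obtain ⟨b, y⟩ := q
  rintro ⟨c, z⟩ hadj
  dsimp only [rootedProd] at hadj
  rcases hadj with ⟨rfl, hxz⟩ | ⟨hxv', -, -⟩
  · by_cases hab : a = b
    · subst hab
      have hyx : y ≠ x := fun h => hq (by rw [h])
      rw [dist_rootedProd_mk_same hG hH, dist_rootedProd_mk_same hG hH, dist_comm (u := x),
        dist_eq_dist_add_one_of_mem_leaves hH hx hxz hyx]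
      omega
    · have hvx := dist_eq_dist_add_one_of_mem_leaves hH hx hxz (Ne.symm hxv)
      rw [dist_rootedProd_mk_of_ne hG hH (Ne.symm hab), dist_rootedProd_mk_of_ne hG hH hab,
        dist_comm (u := x), hvx, dist_comm (u := b), dist_comm (u := y)]
      omega
  · exact absurd hxv' hxv

lemma pairwise_mmd_leafCopies (hG : G.Connected) (hH : H.Connected) :
    (leafCopies α H v).Pairwise (MMD (rootedProd G H v)) := fun _ hp _ hq hpq =>
  ⟨maxDistant_rootedProd_of_mem_leaves hG hH (mem_leafCopies.mp hp).1 (mem_leafCopies.mp hp).2 hpq,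
    maxDistant_rootedProd_of_mem_leaves hG hH (mem_leafCopies.mp hq).1 (mem_leafCopies.mp hq).2
      hpq.symm⟩

lemma stronglyResolves_rootedProd_mk_same_iff (hG : G.Connected) (hH : H.Connected) (a : α)
    (l x y : β) :
    StronglyResolves (rootedProd G H v) (a, l) (a, x) (a, y) ↔ StronglyResolves H l x y := by
  simp only [StronglyResolves, dist_rootedProd_mk_same hG hH]

lemma stronglyResolves_rootedProd_mk_of_ne_iff (hG : G.Connected) (hH : H.Connected) {a c : α}
    (hca : c ≠ a) (m x y : β) :
    StronglyResolves (rootedProd G H v) (c, m) (a, x) (a, y) ↔ StronglyResolves H v x y := by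
  simp only [StronglyResolves, dist_rootedProd_mk_of_ne hG hH hca, dist_rootedProd_mk_same hG hH]
  omega

lemma stronglyResolves_rootedProd_of_dist_eq_add (hG : G.Connected) (hH : H.Connected) {a b : α}
    (hab : a ≠ b) {l x : β} (hl : H.dist v l = H.dist v x + H.dist x l) (y : β) :
    StronglyResolves (rootedProd G H v) (a, l) (a, x) (b, y) := by
  right
  rw [dist_rootedProd_mk_of_ne hG hH hab, dist_rootedProd_mk_of_ne hG hH hab,
    dist_rootedProd_mk_same hG hH, dist_comm (u := l), hl, dist_comm (u := x) (v := l),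
    dist_comm (u := x) (v := v)]
  omega

end LeafCopies

section TreeLeafCopies

variable {α β : Type*} [Finite β] [Nontrivial β] {G : SimpleGraph α} {H : SimpleGraph β} {v : β}

/-- The two leaves of `H` resolving `x, y` serve in the copy `a`, except that a leaf equal to the
root is replaced by a vertex of `leafCopies` in another copy, which sees `x, y` as the root does. -/
lemma exists_two_mem_leafCopies_stronglyResolves_mk_same [Nontrivial α] (hG : G.Connected)
    (hT : H.IsTree) (a : α) {x y : β} (hxy : x ≠ y) :
    ∃ w₁ ∈ leafCopies α H v, ∃ w₂ ∈ leafCopies α H v, w₁ ≠ w₂ ∧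
      StronglyResolves (rootedProd G H v) w₁ (a, x) (a, y) ∧
      StronglyResolves (rootedProd G H v) w₂ (a, x) (a, y) := by
  obtain ⟨l₁, hl₁, l₂, hl₂, hne, h₁, h₂⟩ := exists_two_mem_leaves_stronglyResolves hT hxy
  obtain ⟨c, hca⟩ := exists_ne a
  obtain ⟨m, hm, hmv, -⟩ := exists_mem_leaves_ne_dist_eq_add hT v v
  have hcm : (c, m) ∈ leafCopies α H v := mem_leafCopies.mpr ⟨hm, hmv⟩
  have hres : ∀ {l}, StronglyResolves H l x y →
      StronglyResolves (rootedProd G H v) (a, l) (a, x) (a, y) :=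
    (stronglyResolves_rootedProd_mk_same_iff hG hT.connected a _ x y).mpr
  have hresRoot : StronglyResolves H v x y →
      StronglyResolves (rootedProd G H v) (c, m) (a, x) (a, y) :=
    (stronglyResolves_rootedProd_mk_of_ne_iff hG hT.connected hca m x y).mpr
  by_cases hv₁ : l₁ = v
  · subst hv₁
    exact ⟨(c, m), hcm, (a, l₂), mem_leafCopies.mpr ⟨hl₂, Ne.symm hne⟩,
      fun h => hca (congrArg Prod.fst h), hresRoot h₁, hres h₂⟩
  by_cases hv₂ : l₂ = v
  · subst hv₂
    exact ⟨(a, l₁), mem_leafCopies.mpr ⟨hl₁, hne⟩, (c, m), hcm,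
      fun h => hca (congrArg Prod.fst h).symm, hres h₁, hresRoot h₂⟩
  exact ⟨(a, l₁), mem_leafCopies.mpr ⟨hl₁, hv₁⟩, (a, l₂), mem_leafCopies.mpr ⟨hl₂, hv₂⟩,
    fun h => hne (congrArg Prod.snd h), hres h₁, hres h₂⟩

lemma exists_two_mem_leafCopies_stronglyResolves_mk_of_ne (hG : G.Connected) (hT : H.IsTree)
    {a b : α} (hab : a ≠ b) (x y : β) :
    ∃ w₁ ∈ leafCopies α H v, ∃ w₂ ∈ leafCopies α H v, w₁ ≠ w₂ ∧
      StronglyResolves (rootedProd G H v) w₁ (a, x) (b, y) ∧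
      StronglyResolves (rootedProd G H v) w₂ (a, x) (b, y) := by
  obtain ⟨la, hla, hlav, hda⟩ := exists_mem_leaves_ne_dist_eq_add hT v x
  obtain ⟨lb, hlb, hlbv, hdb⟩ := exists_mem_leaves_ne_dist_eq_add hT v y
  exact ⟨(a, la), mem_leafCopies.mpr ⟨hla, hlav⟩, (b, lb), mem_leafCopies.mpr ⟨hlb, hlbv⟩,
    fun h => hab (congrArg Prod.fst h),
    stronglyResolves_rootedProd_of_dist_eq_add hG hT.connected hab hda y,
    (stronglyResolves_rootedProd_of_dist_eq_add hG hT.connected (Ne.symm hab) hdb x).symm⟩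

lemma isStrongGenerator_leafCopies_sdiff_singleton [Nontrivial α] (hG : G.Connected)
    (hT : H.IsTree) (z : α × β) :
    IsStrongGenerator (rootedProd G H v) (leafCopies α H v \ {z}) := by
  refine isStrongGenerator_sdiff_singleton (fun ⟨a, x⟩ ⟨b, y⟩ hne => ?_) z
  by_cases hab : a = b
  · subst hab
    exact exists_two_mem_leafCopies_stronglyResolves_mk_same hG hT a fun h => hne (by rw [h])
  · exact exists_two_mem_leafCopies_stronglyResolves_mk_of_ne hG hT hab x y

theorem sdim_rootedProd_add_one [Fintype α] [Fintype β] [Nontrivial α] (hG : G.Connected)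
    (hT : H.IsTree) :
    sdim (rootedProd G H v) + 1 = Fintype.card α * (leaves H \ {v}).ncard := by
  obtain ⟨a⟩ := hG.nonempty
  obtain ⟨m, hm, hmv, -⟩ := exists_mem_leaves_ne_dist_eq_add hT v v
  rw [sdim_add_one_eq_ncard (connected_rootedProd hG hT.connected)
    (pairwise_mmd_leafCopies hG hT.connected) (mem_leafCopies.mpr ⟨hm, hmv⟩ : (a, m) ∈ _)
    (isStrongGenerator_leafCopies_sdiff_singleton hG hT _), leafCopies, Set.ncard_prod,
    Set.ncard_univ, Nat.card_eq_fintype_card]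

end TreeLeafCopies

theorem statement7 {α β : Type*} [Fintype α] [Fintype β]
    (G : SimpleGraph α) (T : SimpleGraph β)
    (hG : G.Connected) (hT : T.IsTree)
    {n : ℕ} (hn : Fintype.card α = n) (h2 : 2 ≤ n) (hTn : 2 ≤ Fintype.card β)
    (v : β) (l : ℕ) (hl : l = {x : β | (T.neighborSet x).ncard = 1}.ncard) :
    ((T.neighborSet v).ncard = 1 →
      (sdim (rootedProd G T v) : ℤ) = n * ((l : ℤ) - 1) - 1) ∧
    ((T.neighborSet v).ncard ≠ 1 →
      (sdim (rootedProd G T v) : ℤ) = n * (l : ℤ) - 1) := by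
  have : Nontrivial α := Fintype.one_lt_card_iff_nontrivial.mp (hn ▸ h2)
  have : Nontrivial β := Fintype.one_lt_card_iff_nontrivial.mp hTn
  have hsdim : (sdim (rootedProd G T v) : ℤ) + 1 = n * (leaves T \ {v}).ncard := by
    rw [← hn]
    exact_mod_cast sdim_rootedProd_add_one hG hT
  have hleaves : l = (leaves T).ncard := hl
  constructor
  · intro (hv : v ∈ leaves T)
    have hcard : ((leaves T \ {v}).ncard : ℤ) + 1 = l := by
      rw [hleaves]
      exact_mod_cast Set.ncard_sdiff_singleton_add_one hv
    linear_combination hsdim + (n : ℤ) * hcard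
  · intro (hv : v ∉ leaves T)
    rw [Set.sdiff_singleton_eq_self hv, ← hleaves] at hsdim
    linear_combination hsdim

end RootedStrong
end
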